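/- arXiv:1003.4301 — 3 statements merged into one kernel-verified Lean document; each statement's English description precedes it below -/
import Mathlib

section
/- For an odd integer m with 1 ≤ m ≤ 2^n − 1, the fraction m/2^n has at least n+1 distinct EXB codes. -/
/-!
The lowest digit of a code of an odd number `m` is `±1`, and deleting it leaves a code of
`(m - 1) / 2` or of `(m + 1) / 2` with one digit fewer. Exactly one of these two numbers is odd,
and it lies in the same range one level down, so induction gives it at least `n` codes; the other
one has at least its binary code. The two families stay distinct because their lowest digits differ.
-/

namespace EXB

def codes (n : ℕ) (m : ℤ) : Set (Fin (n + 1) → ℤ) :=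
  {A | (A 0 = 0 ∨ A 0 = 1) ∧
    (∀ j : Fin (n + 1), j ≠ 0 → A j = -1 ∨ A j = 0 ∨ A j = 1) ∧
    ∑ j : Fin (n + 1), A j * 2 ^ (n - j.val) = m}

theorem codes_finite (n : ℕ) (m : ℤ) : (codes n m).Finite := by
  refine (Set.finite_Icc (-1 : Fin (n + 1) → ℤ) 1).subset
    fun A ⟨hA0, hA, _⟩ => ⟨fun j => ?_, fun j => ?_⟩ <;>
  · rcases eq_or_ne j 0 with rfl | hj
    · rcases hA0 with h | h <;> simp [h]
    · rcases hA j hj with h | h | h <;> simp [h]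

theorem sum_snoc_mul_two_pow (n : ℕ) (B : Fin (n + 1) → ℤ) (d : ℤ) :
    ∑ j : Fin (n + 2), (Fin.snoc B d : Fin (n + 2) → ℤ) j * 2 ^ (n + 1 - j.val) =
      2 * ∑ j : Fin (n + 1), B j * 2 ^ (n - j.val) + d := by
  rw [Fin.sum_univ_castSucc, Finset.mul_sum]
  simp only [Fin.snoc_castSucc, Fin.snoc_last, Fin.val_castSucc, Fin.val_last, Nat.sub_self,
    pow_zero, mul_one]
  congr 1
  refine Finset.sum_congr rfl fun j _ => ?_
  rw [show n + 1 - j.val = n - j.val + 1 by omega, pow_succ]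
  ring

theorem snoc_mem_codes {n : ℕ} {x d : ℤ} {B : Fin (n + 1) → ℤ} (hB : B ∈ codes n x)
    (hd : d = -1 ∨ d = 0 ∨ d = 1) :
    (Fin.snoc B d : Fin (n + 2) → ℤ) ∈ codes (n + 1) (2 * x + d) := by
  obtain ⟨hB0, hB, hsum⟩ := hB
  refine ⟨?_, fun j hj => ?_, by rw [sum_snoc_mul_two_pow, hsum]⟩
  · rwa [← Fin.castSucc_zero, Fin.snoc_castSucc]
  · induction j using Fin.lastCases with
    | last => simpa using hd
    | cast i =>
      rw [Fin.snoc_castSucc]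
      exact hB i fun hi => hj (by simp [hi])

theorem codes_nonempty {n : ℕ} {x : ℤ} (hx0 : 0 ≤ x) (hx : x ≤ 2 ^ n) :
    (codes n x).Nonempty := by
  induction n generalizing x with
  | zero =>
    refine ⟨fun _ => x, by dsimp only; omega, fun j hj => absurd (Fin.fin_one_eq_zero j) hj, ?_⟩
    simp
  | succ n ih =>
    obtain ⟨B, hB⟩ := ih (x := x / 2) (by omega) (by rw [pow_succ] at hx; omega)
    refine ⟨Fin.snoc B (x % 2), ?_⟩
    have hcode := snoc_mem_codes hB (d := x % 2) (by omega)
    rwa [Int.mul_ediv_add_emod] at hcode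

theorem ncard_codes_add_ncard_codes_succ_le (n : ℕ) (x : ℤ) :
    (codes n x).ncard + (codes n (x + 1)).ncard ≤ (codes (n + 1) (2 * x + 1)).ncard := by
  set plusOne : (Fin (n + 1) → ℤ) → Fin (n + 2) → ℤ := fun B => Fin.snoc B 1
  set minusOne : (Fin (n + 1) → ℤ) → Fin (n + 2) → ℤ := fun B => Fin.snoc B (-1)
  have hdisj : Disjoint (plusOne '' codes n x) (minusOne '' codes n (x + 1)) := by
    refine Set.disjoint_left.2 ?_
    rintro _ ⟨B, -, rfl⟩ ⟨B', -, h⟩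
    simpa [plusOne, minusOne] using congrFun h (Fin.last _)
  have hsub :
      plusOne '' codes n x ∪ minusOne '' codes n (x + 1) ⊆ codes (n + 1) (2 * x + 1) := by
    rintro _ (⟨B, hB, rfl⟩ | ⟨B, hB, rfl⟩)
    · exact snoc_mem_codes hB (by norm_num)
    · simpa [mul_add, add_assoc] using snoc_mem_codes hB (d := -1) (by norm_num)
  calc (codes n x).ncard + (codes n (x + 1)).ncard
      = (plusOne '' codes n x ∪ minusOne '' codes n (x + 1)).ncard := by
        rw [Set.ncard_union_eq hdisj ((codes_finite n x).image _) ((codes_finite n _).image _),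
          Set.ncard_image_of_injective (f := plusOne) _
            (Fin.snoc_left_injective (α := fun _ => ℤ) 1),
          Set.ncard_image_of_injective (f := minusOne) _
            (Fin.snoc_left_injective (α := fun _ => ℤ) (-1))]
    _ ≤ (codes (n + 1) (2 * x + 1)).ncard := Set.ncard_le_ncard hsub (codes_finite _ _)

theorem succ_le_ncard_codes {n : ℕ} {m : ℤ} (hodd : Odd m) (h1 : 1 ≤ m) (h2 : m ≤ 2 ^ n) :
    n + 1 ≤ (codes n m).ncard := by
  induction n generalizing m with
  | zero => exact (codes_nonempty (by omega) h2).ncard_pos (codes_finite _ _)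
  | succ n ih =>
    obtain ⟨x, rfl⟩ := hodd
    rw [pow_succ] at h2
    have hsplit := ncard_codes_add_ncard_codes_succ_le n x
    rcases Int.even_or_odd x with hx | hx
    · have := ih hx.add_one (by obtain ⟨y, rfl⟩ := hx; omega) (by omega)
      have := (codes_nonempty (n := n) (x := x) (by omega) (by omega)).ncard_pos (codes_finite _ _)
      omega
    · have := ih hx (by obtain ⟨y, rfl⟩ := hx; omega) (by omega)
      have := (codes_nonempty (n := n) (x := x + 1) (by omega) (by omega)).ncard_pos
        (codes_finite _ _)
      omega

end EXB

/-- For odd m with 1 ≤ m ≤ 2^n - 1, the fraction m/2^n has at least n+1 distinct EXB codes. -/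
theorem exb_codes_card_ge (n : ℕ) (m : ℤ) (hodd : Odd m) (h1 : 1 ≤ m) (h2 : m ≤ 2 ^ n - 1) :
    n + 1 ≤ Set.ncard {A : Fin (n + 1) → ℤ |
      (A 0 = 0 ∨ A 0 = 1) ∧
      (∀ j : Fin (n + 1), j ≠ 0 → A j = -1 ∨ A j = 0 ∨ A j = 1) ∧
      ∑ j : Fin (n + 1), A j * 2 ^ (n - j.val) = m} :=
  EXB.succ_le_ncard_codes hodd h1 (by omega)
end

section
/- If (A_0, ..., A_n) is an EXB code of m/2^n with m odd and some A_j = 1 (j ≥ 1), then there exists another EXB code (B_0, ..., B_n) of m/2^n with B_j = -1. -/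
/-!
Let `i < j` be the last position before `j` whose digit is not `1` (it exists: two leading ones
already force a value above `2^n`). Then `A_i ∈ {-1, 0}`, and since
`2^(n-i) = 2^(n-i-1) + ⋯ + 2^(n-j+1) + 2 · 2^(n-j)`, raising `A_i` by one is compensated by
turning the ones after it into `0, …, 0, -1`.
-/

open Finset

def signedBinaryValue (n : ℕ) (A : ℕ → ℤ) : ℤ :=
  ∑ k ∈ Icc 0 n, A k * 2 ^ (n - k)

theorem signedBinaryValue_eq (n : ℕ) (A : ℕ → ℤ) :
    signedBinaryValue n A = A 0 * 2 ^ n + ∑ k ∈ Icc 1 n, A k * 2 ^ (n - k) := by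
  rw [signedBinaryValue, Icc_eq_cons_Ioc n.zero_le, sum_cons, ← Icc_add_one_left_eq_Ioc,
    zero_add, Nat.sub_zero]

theorem signedBinaryValue_add (n : ℕ) (A B : ℕ → ℤ) :
    signedBinaryValue n (A + B) = signedBinaryValue n A + signedBinaryValue n B := by
  simp only [signedBinaryValue, Pi.add_apply, add_mul, sum_add_distrib]

theorem sum_Ioc_two_pow {n i j : ℕ} (hij : i ≤ j) (hjn : j ≤ n) :
    ∑ k ∈ Ioc i j, (2 : ℤ) ^ (n - k) = 2 ^ (n - i) - 2 ^ (n - j) := by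
  induction j, hij using Nat.le_induction with
  | base => simp
  | succ j hij ih =>
    rw [sum_Ioc_succ_top (by omega), ih (by omega), show n - j = n - (j + 1) + 1 by omega,
      pow_succ]
    ring

theorem neg_two_pow_lt_sum_Ioc {n i : ℕ} {A : ℕ → ℤ} (hin : i ≤ n)
    (hA : ∀ k ∈ Ioc i n, -1 ≤ A k) :
    -2 ^ (n - i) < ∑ k ∈ Ioc i n, A k * 2 ^ (n - k) :=
  calc -2 ^ (n - i) < -(2 ^ (n - i) - 2 ^ (n - n)) := by simp
    _ = ∑ k ∈ Ioc i n, -(2 : ℤ) ^ (n - k) := by rw [sum_neg_distrib, sum_Ioc_two_pow hin le_rfl]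
    _ ≤ ∑ k ∈ Ioc i n, A k * 2 ^ (n - k) :=
      sum_le_sum fun k hk => by nlinarith [hA k hk, pow_pos (two_pos : (0 : ℤ) < 2) (n - k)]

theorem two_pow_lt_signedBinaryValue {n : ℕ} {A : ℕ → ℤ} (hn : 1 ≤ n) (h0 : A 0 = 1)
    (h1 : A 1 = 1) (hA : ∀ k ∈ Ioc 1 n, -1 ≤ A k) :
    2 ^ n < signedBinaryValue n A := by
  have htail := neg_two_pow_lt_sum_Ioc hn hA
  rw [signedBinaryValue_eq, Icc_eq_cons_Ioc hn, sum_cons, h0, h1]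
  linarith

/-- `A + carry i j` turns digits `A_i, 1, …, 1` at positions `i, …, j` into
`A_i + 1, 0, …, 0, -1`. -/
def carry (i j : ℕ) (k : ℕ) : ℤ :=
  (if k = i then 1 else 0) - (if k ∈ Ioc i j then 1 else 0) - (if k = j then 1 else 0)

theorem signedBinaryValue_carry {n i j : ℕ} (hij : i ≤ j) (hjn : j ≤ n) :
    signedBinaryValue n (carry i j) = 0 := by
  have hsub : Ioc i j ⊆ Icc 0 n := Ioc_subset_Icc_self.trans (Icc_subset_Icc (by omega) hjn)
  simp only [signedBinaryValue, carry, sub_mul, sum_sub_distrib, ite_mul, one_mul, zero_mul,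
    sum_ite_eq', sum_ite_mem, inter_eq_right.2 hsub, sum_Ioc_two_pow hij hjn, mem_Icc]
  simp [show i ≤ n by omega, hjn]

theorem exists_lt_not_and_forall_Ioc {P : ℕ → Prop} {i₀ j : ℕ} (hi₀ : i₀ < j) (h : ¬P i₀)
    (hj : P j) : ∃ i < j, ¬P i ∧ ∀ k ∈ Ioc i j, P k := by
  classical
  refine ⟨Nat.findGreatest (¬P ·) (j - 1), (Nat.findGreatest_le _).trans_lt (by omega),
    Nat.findGreatest_spec (P := (¬P ·)) (show i₀ ≤ j - 1 by omega) h, fun k hk => ?_⟩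
  rw [mem_Ioc] at hk
  rcases hk.2.eq_or_lt with rfl | hkj
  · exact hj
  · exact not_not.1 (Nat.findGreatest_is_greatest hk.1 (by omega))

theorem exb_code_sign_flip_general (n : ℕ) (m : ℤ) (h2 : m ≤ 2 ^ n - 1)
    (A : ℕ → ℤ) (hA0 : A 0 = 0 ∨ A 0 = 1)
    (hAdig : ∀ j, 1 ≤ j → j ≤ n → A j = -1 ∨ A j = 0 ∨ A j = 1)
    (hAsum : A 0 * 2 ^ n + ∑ j ∈ Finset.Icc 1 n, A j * 2 ^ (n - j) = m)
    (j : ℕ) (hj1 : 1 ≤ j) (hjn : j ≤ n) (hAj : A j = 1) :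
    ∃ B : ℕ → ℤ, (B 0 = 0 ∨ B 0 = 1) ∧
      (∀ k, 1 ≤ k → k ≤ n → B k = -1 ∨ B k = 0 ∨ B k = 1) ∧
      B 0 * 2 ^ n + ∑ k ∈ Finset.Icc 1 n, B k * 2 ^ (n - k) = m ∧
      B j = -1 := by
  rw [← signedBinaryValue_eq] at hAsum
  have hlead : A 0 ≠ 1 ∨ A 1 ≠ 1 := by
    by_contra! h
    have := two_pow_lt_signedBinaryValue (hj1.trans hjn) h.1 h.2 fun k hk => by
      rcases hAdig k (mem_Ioc.1 hk).1.le (mem_Ioc.1 hk).2 with h | h | h <;> omega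
    omega
  obtain ⟨i, hij, hAi, hones⟩ : ∃ i < j, A i ≠ 1 ∧ ∀ k ∈ Ioc i j, A k = 1 := by
    rcases hlead with h | h
    · exact exists_lt_not_and_forall_Ioc (by omega) h hAj
    · exact exists_lt_not_and_forall_Ioc (hj1.lt_of_ne (by rintro rfl; exact h hAj)) h hAj
  refine ⟨A + carry i j, ?_, ?_, ?_, ?_⟩
  · have h0 := hones 0
    simp only [Pi.add_apply, carry, mem_Ioc] at h0 ⊢
    split_ifs <;> subst_vars <;> omega
  · intro k hk1 hkn
    have hk := hones k
    have hAk := hAdig k hk1 hkn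
    simp only [Pi.add_apply, carry, mem_Ioc] at hk ⊢
    split_ifs <;> subst_vars <;> omega
  · rw [← signedBinaryValue_eq, signedBinaryValue_add, signedBinaryValue_carry hij.le hjn,
      add_zero, hAsum]
  · simp [carry, hAj, hij.ne', hij]

/-- If an EXB code of m/2^n (m odd) has A_j = 1 at some position j ≥ 1, then some other
EXB code of the same m/2^n has -1 at position j. -/
theorem exb_code_sign_flip (n : ℕ) (m : ℤ) (hodd : Odd m) (h1 : 1 ≤ m) (h2 : m ≤ 2 ^ n - 1)
    (A : ℕ → ℤ) (hA0 : A 0 = 0 ∨ A 0 = 1)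
    (hAdig : ∀ j, 1 ≤ j → j ≤ n → A j = -1 ∨ A j = 0 ∨ A j = 1)
    (hAsum : A 0 * 2 ^ n + ∑ j ∈ Finset.Icc 1 n, A j * 2 ^ (n - j) = m)
    (j : ℕ) (hj1 : 1 ≤ j) (hjn : j ≤ n) (hAj : A j = 1) :
    ∃ B : ℕ → ℤ, (B 0 = 0 ∨ B 0 = 1) ∧
      (∀ k, 1 ≤ k → k ≤ n → B k = -1 ∨ B k = 0 ∨ B k = 1) ∧
      B 0 * 2 ^ n + ∑ k ∈ Finset.Icc 1 n, B k * 2 ^ (n - k) = m ∧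
      B j = -1 :=
  exb_code_sign_flip_general n m h2 A hA0 hAdig hAsum j hj1 hjn hAj
end

section
/- In steady state of the voltage follower SCC, if the same charge Q = ΔV_1·C(1 − e^{−β_1}) = ΔV_2·C(1 − e^{−β_2}) is transferred in both phases with average current I_av = f_s·Q, then the total average power loss P = f_s(E_1 + E_2), with E_i = (ΔV_i)²C(1 − e^{−2β_i})/2, equals I_av²·(1/(2f_sC))·(coth(β_1/2) + coth(β_2/2)). Hence R_eq = (1/(2f_sC))(coth(β_1/2) + coth(β_2/2)). -/
noncomputable def coth (x : ℝ) : ℝ := Real.cosh x / Real.sinh x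

/-!
Since `1 - e^{-2β} = (1 - e^{-β})(1 + e^{-β})`, each phase dissipates
`f_s E_i = I_av² / (2 f_s C) · (1 + e^{-β_i}) / (1 - e^{-β_i})`, and multiplying numerator and
denominator of `coth (β/2)` by `2 e^{-β/2}` shows that this ratio is `coth (β_i / 2)`.
-/

open Real

theorem coth_half_eq (β : ℝ) : coth (β / 2) = (1 + exp (-β)) / (1 - exp (-β)) := by
  have hsq : exp (-(β / 2)) * exp (-(β / 2)) = exp (-β) := by rw [← exp_add]; ring_nf
  have hinv : exp (β / 2) * exp (-(β / 2)) = 1 := by rw [← exp_add]; simp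
  rw [coth, cosh_eq, sinh_eq, div_div_div_cancel_right₀ two_ne_zero,
    ← mul_div_mul_right _ _ (exp_pos (-(β / 2))).ne']
  congr 1
  · linear_combination hinv + hsq
  · linear_combination hinv - hsq

theorem phase_power_eq_coth (f C I β : ℝ) :
    f * ((I / (f * C * (1 - exp (-β)))) ^ 2 * C * (1 - exp (-2 * β)) / 2) =
      I ^ 2 * (1 / (2 * f * C)) * coth (β / 2) := by
  have hsq : exp (-2 * β) = exp (-β) ^ 2 := by rw [← exp_nat_mul]; ring_nf
  rw [coth_half_eq, hsq]
  generalize exp (-β) = x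
  -- In the degenerate cases both sides vanish, by the convention `a / 0 = 0`.
  rcases eq_or_ne f 0 with rfl | hf
  · simp
  rcases eq_or_ne C 0 with rfl | hC
  · simp
  rcases eq_or_ne x 1 with rfl | hx
  · simp
  have hx' : 1 - x ≠ 0 := sub_ne_zero.mpr hx.symm
  field_simp
  ring

theorem scc_equivalent_resistor_general (β1 β2 fs C Iav : ℝ)
    (ΔV1 ΔV2 E1 E2 : ℝ)
    (hΔV1 : ΔV1 = Iav / (fs * C * (1 - Real.exp (-β1))))
    (hΔV2 : ΔV2 = Iav / (fs * C * (1 - Real.exp (-β2))))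
    (hE1 : E1 = ΔV1 ^ 2 * C * (1 - Real.exp (-2 * β1)) / 2)
    (hE2 : E2 = ΔV2 ^ 2 * C * (1 - Real.exp (-2 * β2)) / 2) :
    fs * (E1 + E2) = Iav ^ 2 * (1 / (2 * fs * C)) * (coth (β1 / 2) + coth (β2 / 2)) := by
  subst hE1 hE2 hΔV1 hΔV2
  rw [mul_add, phase_power_eq_coth, phase_power_eq_coth, mul_add]

/-- Equivalent resistor of the voltage follower SCC: with ΔV_i = I_av/(f_s C (1-e^{-β_i}))
and E_i = (ΔV_i)² C (1-e^{-2β_i})/2, the power f_s(E₁+E₂) equals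
I_av² · (1/(2 f_s C)) · (coth(β₁/2) + coth(β₂/2)). -/
theorem scc_equivalent_resistor (β1 β2 fs C Iav : ℝ)
    (hβ1 : 0 < β1) (hβ2 : 0 < β2) (hfs : 0 < fs) (hC : 0 < C)
    (ΔV1 ΔV2 E1 E2 : ℝ)
    (hΔV1 : ΔV1 = Iav / (fs * C * (1 - Real.exp (-β1))))
    (hΔV2 : ΔV2 = Iav / (fs * C * (1 - Real.exp (-β2))))
    (hE1 : E1 = ΔV1 ^ 2 * C * (1 - Real.exp (-2 * β1)) / 2)
    (hE2 : E2 = ΔV2 ^ 2 * C * (1 - Real.exp (-2 * β2)) / 2) :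
    fs * (E1 + E2) = Iav ^ 2 * (1 / (2 * fs * C)) * (coth (β1 / 2) + coth (β2 / 2)) :=
  scc_equivalent_resistor_general β1 β2 fs C Iav ΔV1 ΔV2 E1 E2 hΔV1 hΔV2 hE1 hE2
end
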